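/- Let z = (z₁, z₂) ∈ ℝ², γ₀ ∈ ℝ with γ₀ > z₂, and let A₀ : ℝ → ℝ be continuously differentiable. Define A on the open half-plane H = {x ∈ ℝ² : x₂ > z₂} by A(x) = A₀(p₁(x)) · ((γ₀ − z₂)/(x₂ − z₂))^(1/2), where p₁(x) = z₁ + ((γ₀ − z₂)/(x₂ − z₂))·(x₁ − z₁) is the first coordinate of the intersection of the ray from z through x with the line {x₂ = γ₀}. Then: (i) A is continuously differentiable on H; (ii) A satisfies the transport equation ∇A·∇φ + (1/2) A Δφ = 0 on H, where φ(x) = ‖x − z‖; and (iii) A(x₁, γ₀) = A₀(x₁) for all x₁ ∈ ℝ. In particular, for any γ₁ with z₂ < γ₁ < γ₀ and any x = (x₁, γ₁), A(x) = A₀(p₁(x)) · ((γ₀ − z₂)/(γ₁ − z₂))^(1/2). -/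

import Mathlib

/-!
The foot point `p₁` is constant along each ray from `z`, and the factor
`((γ₀ - z₂)/(x₂ - z₂))^(1/2)` scales by `t^(-1/2)` when `x - z` is scaled by `t`, so `A` is
positively homogeneous of degree `-1/2` about `z`. Since `∇φ = (x - z)/‖x - z‖` and, in the plane,
`Δφ = 1/‖x - z‖`, Euler's identity `DA(x)(x - z) = -A(x)/2` is exactly the transport equation.
-/

open scoped BigOperators

/-- The Laplacian of a real-valued function on the Euclidean plane, defined as the
divergence of the gradient: `Δf(x) = ∑ i, ∂ᵢ (∇f)ᵢ (x)`. -/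
noncomputable def planeLaplacian (f : EuclideanSpace ℝ (Fin 2) → ℝ)
    (x : EuclideanSpace ℝ (Fin 2)) : ℝ :=
  ∑ i : Fin 2, fderiv ℝ (fun y => gradient f y i) x (EuclideanSpace.single i 1)

open scoped RealInnerProductSpace
open Filter Topology

section Homogeneous
variable {E F : Type*} [NormedAddCommGroup E] [NormedSpace ℝ E]
  [NormedAddCommGroup F] [NormedSpace ℝ F]

theorem fderiv_apply_sub_eq_smul_of_homogeneous {f : E → F} {z x : E} {a : ℝ}
    (hf : DifferentiableAt ℝ f x) (hom : ∀ t : ℝ, 0 < t → f (z + t • (x - z)) = t ^ a • f x) :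
    fderiv ℝ f x (x - z) = a • f x := by
  have hline : HasDerivAt (fun t : ℝ => z + t • (x - z)) (x - z) 1 := by
    simpa using ((hasDerivAt_id (1 : ℝ)).smul_const (x - z)).const_add z
  have hray : HasDerivAt (fun t : ℝ => f (z + t • (x - z))) (fderiv ℝ f x (x - z)) 1 := by
    refine HasFDerivAt.comp_hasDerivAt (f := fun t : ℝ => z + t • (x - z)) 1 ?_ hline
    simpa using hf.hasFDerivAt
  have hpow : HasDerivAt (fun t : ℝ => t ^ a • f x) (a • f x) 1 := by
    simpa using (Real.hasDerivAt_rpow_const (x := 1) (p := a) (Or.inl one_ne_zero)).smul_const (f x)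
  have heq : (fun t : ℝ => f (z + t • (x - z))) =ᶠ[𝓝 1] fun t => t ^ a • f x :=
    eventually_of_mem (Ioi_mem_nhds one_pos) hom
  exact hray.unique (hpow.congr_of_eventuallyEq heq)

end Homogeneous

section NormGradient
variable {E : Type*} [NormedAddCommGroup E] [InnerProductSpace ℝ E]

theorem hasFDerivAt_norm_of_ne_zero {x : E} (hx : x ≠ 0) :
    HasFDerivAt (‖·‖) (‖x‖⁻¹ • innerSL ℝ x) x := by
  have hsq : ‖x‖ ^ 2 ≠ 0 := by positivity
  convert (hasStrictFDerivAt_norm_sq x).hasFDerivAt.sqrt hsq using 1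
  · funext y; simp [Real.sqrt_sq (norm_nonneg y)]
  · ext v
    simp only [smul_apply, coe_innerSL_apply, smul_eq_mul,
      Real.sqrt_sq (norm_nonneg x), nsmul_eq_mul, Nat.cast_ofNat]
    field_simp

theorem hasGradientAt_norm_sub [CompleteSpace E] {z x : E} (hx : x ≠ z) :
    HasGradientAt (‖· - z‖) (‖x - z‖⁻¹ • (x - z)) x := by
  rw [hasGradientAt_iff_hasFDerivAt]
  refine ((hasFDerivAt_norm_of_ne_zero (sub_ne_zero.2 hx)).comp x
    ((hasFDerivAt_id x).sub_const z)).congr_fderiv ?_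
  ext v
  simp

end NormGradient

section Laplacian
variable {ι : Type*} [Fintype ι] [DecidableEq ι]

theorem fderiv_gradient_norm_sub_apply_single {z x : EuclideanSpace ℝ ι} (hx : x ≠ z) (i : ι) :
    fderiv ℝ (fun y => gradient (‖· - z‖) y i) x (EuclideanSpace.single i 1)
      = ‖x - z‖⁻¹ - (x i - z i) ^ 2 / ‖x - z‖ ^ 3 := by
  have hr : ‖x - z‖ ≠ 0 := norm_ne_zero_iff.2 (sub_ne_zero.2 hx)
  have hloc : (fun y => gradient (‖· - z‖) y i) =ᶠ[𝓝 x] fun y => ‖y - z‖⁻¹ * (y i - z i) := by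
    filter_upwards [isOpen_ne.mem_nhds hx] with y hy
    simp [(hasGradientAt_norm_sub hy).gradient]
  have hinv : HasFDerivAt (fun y => ‖y - z‖⁻¹) _ x :=
    (hasDerivAt_inv hr).comp_hasFDerivAt x
      ((hasFDerivAt_norm_of_ne_zero (sub_ne_zero.2 hx)).comp x ((hasFDerivAt_id x).sub_const z))
  have hcoord : HasFDerivAt (fun y : EuclideanSpace ℝ ι => y i - z i)
      (EuclideanSpace.proj i : EuclideanSpace ℝ ι →L[ℝ] ℝ) x :=
    (EuclideanSpace.proj (𝕜 := ℝ) i).hasFDerivAt.sub_const (z i)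
  rw [hloc.fderiv_eq, (hinv.fun_mul hcoord).fderiv]
  simp only [map_sub, ContinuousLinearMap.comp_id, neg_smul, smul_neg, add_apply, smul_apply,
    PiLp.proj_apply, PiLp.single_eq_same, smul_eq_mul, mul_one, neg_apply, sub_apply,
    coe_innerSL_apply, EuclideanSpace.inner_single_right, Real.ringHom_apply, one_mul]
  field_simp
  ring

theorem planeLaplacian_norm_sub {z x : EuclideanSpace ℝ (Fin 2)} (hx : x ≠ z) :
    planeLaplacian (‖· - z‖) x = ‖x - z‖⁻¹ := by
  have hr : ‖x - z‖ ≠ 0 := norm_ne_zero_iff.2 (sub_ne_zero.2 hx)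
  have hsq : ‖x - z‖ ^ 2 = (x 0 - z 0) ^ 2 + (x 1 - z 1) ^ 2 := by
    simp [EuclideanSpace.norm_sq_eq, Fin.sum_univ_two]
  rw [planeLaplacian, Fin.sum_univ_two, fderiv_gradient_norm_sub_apply_single hx,
    fderiv_gradient_norm_sub_apply_single hx]
  field_simp
  linear_combination hsq

end Laplacian

local notation "E2" => EuclideanSpace ℝ (Fin 2)

theorem transport_eq_of_homogeneous {A : E2 → ℝ} {z x : E2} (hx : x ≠ z)
    (hA : DifferentiableAt ℝ A x)
    (hom : ∀ t : ℝ, 0 < t → A (z + t • (x - z)) = t ^ (-(1 / 2) : ℝ) * A x) :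
    ⟪gradient A x, gradient (‖· - z‖) x⟫ + 1 / 2 * A x * planeLaplacian (‖· - z‖) x = 0 := by
  have hr : ‖x - z‖ ≠ 0 := norm_ne_zero_iff.2 (sub_ne_zero.2 hx)
  have euler : fderiv ℝ A x (x - z) = -(1 / 2) * A x :=
    fderiv_apply_sub_eq_smul_of_homogeneous hA hom
  rw [(hasGradientAt_norm_sub hx).gradient, planeLaplacian_norm_sub hx, gradient,
    real_inner_smul_right, InnerProductSpace.toDual_symm_apply, euler]
  ring

noncomputable def transportedAmplitude (z : E2) (γ₀ : ℝ) (A₀ : ℝ → ℝ) (x : E2) : ℝ :=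
  A₀ (z 0 + ((γ₀ - z 1) / (x 1 - z 1)) * (x 0 - z 0)) * ((γ₀ - z 1) / (x 1 - z 1)) ^ ((1 : ℝ) / 2)

section TransportedAmplitude
variable {z x : E2} {γ₀ : ℝ} {A₀ : ℝ → ℝ}

theorem contDiffAt_transportedAmplitude {n : WithTop ℕ∞} (hγ₀ : z 1 < γ₀) (hx : z 1 < x 1)
    (hA₀ : ContDiff ℝ n A₀) : ContDiffAt ℝ n (transportedAmplitude z γ₀ A₀) x := by
  have hcoord (i : Fin 2) : ContDiff ℝ n fun y : E2 => y i :=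
    (EuclideanSpace.proj (𝕜 := ℝ) i).contDiff
  have hscale : ContDiffAt ℝ n (fun y : E2 => (γ₀ - z 1) / (y 1 - z 1)) x :=
    contDiffAt_const.div ((hcoord 1).contDiffAt.sub contDiffAt_const) (sub_pos.2 hx).ne'
  exact (hA₀.contDiffAt.comp x
      (contDiffAt_const.add (hscale.mul ((hcoord 0).contDiffAt.sub contDiffAt_const)))).mul
    (hscale.rpow_const_of_ne (div_pos (sub_pos.2 hγ₀) (sub_pos.2 hx)).ne')

theorem transportedAmplitude_homogeneous (hγ₀ : z 1 ≤ γ₀) (hx : z 1 ≤ x 1) {t : ℝ} (ht : 0 < t) :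
    transportedAmplitude z γ₀ A₀ (z + t • (x - z))
      = t ^ (-(1 / 2) : ℝ) * transportedAmplitude z γ₀ A₀ x := by
  have hk : 0 ≤ (γ₀ - z 1) / (x 1 - z 1) := div_nonneg (sub_nonneg.2 hγ₀) (sub_nonneg.2 hx)
  have hscale : (γ₀ - z 1) / (t * (x 1 - z 1)) = t⁻¹ * ((γ₀ - z 1) / (x 1 - z 1)) := by
    rw [mul_comm t, ← div_div, div_eq_inv_mul]
  simp only [transportedAmplitude, PiLp.add_apply, PiLp.smul_apply, PiLp.sub_apply, smul_eq_mul,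
    add_sub_cancel_left, hscale, Real.mul_rpow (inv_nonneg.2 ht.le) hk, Real.rpow_neg ht.le,
    Real.inv_rpow ht.le]
  field_simp

theorem transportedAmplitude_of_snd_eq (hγ₀ : z 1 ≠ γ₀) (hx : x 1 = γ₀) :
    transportedAmplitude z γ₀ A₀ x = A₀ (x 0) := by
  rw [transportedAmplitude, hx, div_self (sub_ne_zero.2 hγ₀.symm), Real.one_rpow, mul_one, one_mul,
    add_sub_cancel]

end TransportedAmplitude

/-- The amplitude `A(x) = A₀(p₁(x)) · ((γ₀ − z₂)/(x₂ − z₂))^(1/2)` obtained by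
transporting a `C¹` boundary amplitude `A₀` given on the line `x₂ = γ₀` along the rays
through `z` is `C¹` on the half-plane `H = {x : x₂ > z₂}`, satisfies the transport
equation `∇A·∇φ + (1/2) A Δφ = 0` there (`φ(x) = ‖x − z‖`), and has trace `A₀` on the
line `x₂ = γ₀`; in particular on a line `x₂ = γ₁` with `z₂ < γ₁ < γ₀` it equals
`A₀(p₁(x)) · ((γ₀ − z₂)/(γ₁ − z₂))^(1/2)`. -/
theorem transported_amplitude (z : EuclideanSpace ℝ (Fin 2)) (γ₀ : ℝ) (hγ₀ : z 1 < γ₀)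
    (A₀ : ℝ → ℝ) (hA₀ : ContDiff ℝ 1 A₀) :
    let p₁ : EuclideanSpace ℝ (Fin 2) → ℝ :=
      fun x => z 0 + ((γ₀ - z 1) / (x 1 - z 1)) * (x 0 - z 0)
    let A : EuclideanSpace ℝ (Fin 2) → ℝ :=
      fun x => A₀ (p₁ x) * ((γ₀ - z 1) / (x 1 - z 1)) ^ ((1:ℝ)/2)
    let H : Set (EuclideanSpace ℝ (Fin 2)) := {x | z 1 < x 1}
    ContDiffOn ℝ 1 A H ∧
    (∀ x ∈ H,
      (inner ℝ (gradient A x) (gradient (fun y : EuclideanSpace ℝ (Fin 2) => ‖y - z‖) x) : ℝ)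
        + (1/2) * A x * planeLaplacian (fun y => ‖y - z‖) x = 0) ∧
    (∀ x : EuclideanSpace ℝ (Fin 2), x 1 = γ₀ → A x = A₀ (x 0)) ∧
    (∀ γ₁ : ℝ, z 1 < γ₁ → γ₁ < γ₀ → ∀ x : EuclideanSpace ℝ (Fin 2), x 1 = γ₁ →
      A x = A₀ (p₁ x) * ((γ₀ - z 1) / (γ₁ - z 1)) ^ ((1:ℝ)/2)) := by
  intro p₁ A H
  have hA : ∀ x ∈ H, ContDiffAt ℝ 1 A x := fun x hx => contDiffAt_transportedAmplitude hγ₀ hx hA₀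
  refine ⟨fun x hx => (hA x hx).contDiffWithinAt, fun x hx => ?_,
    fun x hx => transportedAmplitude_of_snd_eq hγ₀.ne hx, by rintro γ₁ - - x rfl; rfl⟩
  have hxz : x ≠ z := ne_of_apply_ne (· 1) (ne_of_gt hx)
  exact transport_eq_of_homogeneous hxz ((hA x hx).differentiableAt one_ne_zero)
    fun t ht => transportedAmplitude_homogeneous hγ₀.le hx.le ht
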